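/- Let 0 < ε₀ ≤ 1/2 and let γ ∈ [ε₀, 1−ε₀]. Then there exists a constant C > 0, depending only on ε₀, such that for every r₀ ≥ 0 and every s ∈ [0, 1], setting z = −1 + i·s, one has |√(z − r₀) − γ·√z| ≥ C·√(1 + r₀), where √ denotes the principal branch of the complex square root. -/

import Mathlib

/-- The principal branch of the complex square root, `√ζ = exp((1/2)·Log ζ)`. -/
noncomputable def csqrt (ζ : ℂ) : ℂ := ζ ^ (1 / 2 : ℂ)

lemma csqrt_sq (ζ : ℂ) : csqrt ζ ^ 2 = ζ := by
  have := (Complex.cpow_nat_mul ζ 2 (1 / 2 : ℂ)).symm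
  simp only [csqrt] at this ⊢
  simpa using this

lemma abs_csqrt (ζ : ℂ) : ‖csqrt ζ‖ = Real.sqrt ‖ζ‖ := by
  conv_rhs => rw [← csqrt_sq ζ]
  rw [norm_pow, Real.sqrt_sq (norm_nonneg _)]

theorem stmt_8 (ε₀ : ℝ) (hε₀ : 0 < ε₀) (hε₀' : ε₀ ≤ 1 / 2) :
    ∃ C > 0, ∀ γ ∈ Set.Icc ε₀ (1 - ε₀), ∀ r₀ : ℝ, 0 ≤ r₀ →
      ∀ s ∈ Set.Icc (0 : ℝ) 1,
        C * Real.sqrt (1 + r₀) ≤ ‖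
          (csqrt ((-1 + Complex.I * (s : ℂ)) - (r₀ : ℂ)) -
            (γ : ℂ) * csqrt (-1 + Complex.I * (s : ℂ)))‖ := by
  refine ⟨ε₀ / 3, by positivity, ?_⟩
  rintro γ ⟨hγ₁, hγ₂⟩ r₀ hr₀ s ⟨hs₀, hs₁⟩
  set z : ℂ := -1 + Complex.I * (s : ℂ) with hz
  set a : ℂ := csqrt (z - (r₀ : ℂ)) with ha
  set b : ℂ := (γ : ℂ) * csqrt z with hb
  -- key identity
  have key : (a - b) * (a + b) = ((1 - γ ^ 2 : ℝ) : ℂ) * z - (r₀ : ℂ) := by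
    have h1 : a ^ 2 = z - (r₀ : ℂ) := csqrt_sq _
    have h2 : csqrt z ^ 2 = z := csqrt_sq _
    calc (a - b) * (a + b) = a ^ 2 - (γ : ℂ) ^ 2 * csqrt z ^ 2 := by rw [hb]; ring
    _ = (z - (r₀ : ℂ)) - (γ : ℂ) ^ 2 * z := by rw [h1, h2]
    _ = ((1 - γ ^ 2 : ℝ) : ℂ) * z - (r₀ : ℂ) := by push_cast; ring
  have hsq1 : (1 : ℝ) ≤ Real.sqrt (1 + r₀) := by
    have := Real.sqrt_le_sqrt (show (1:ℝ) ≤ 1 + r₀ by linarith)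
    simpa using this
  have hsqpos : (0 : ℝ) < Real.sqrt (1 + r₀) := by linarith
  -- bound |z|
  have habsz : ‖z‖ ≤ 2 := by
    calc ‖z‖ ≤ ‖(-1 : ℂ)‖ + ‖Complex.I * (s : ℂ)‖ :=
          norm_add_le _ _
    _ ≤ 1 + 1 := by
        simp [abs_of_nonneg hs₀]
        linarith
    _ = 2 := by norm_num
  -- lower bound on numerator
  have hγ2 : 1 - γ ^ 2 ≥ ε₀ := by nlinarith
  have hnum : ε₀ * (1 + r₀) ≤ ‖((1 - γ ^ 2 : ℝ) : ℂ) * z - (r₀ : ℂ)‖ := by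
    have hre : ((((1 - γ ^ 2 : ℝ) : ℂ)) * z - (r₀ : ℂ)).re = -(1 - γ ^ 2) - r₀ := by
      simp [hz, Complex.mul_re, ← Complex.ofReal_pow]
    calc ε₀ * (1 + r₀) ≤ (1 - γ ^ 2) + r₀ := by nlinarith
    _ = |((((1 - γ ^ 2 : ℝ) : ℂ)) * z - (r₀ : ℂ)).re| := by
        rw [hre, abs_of_nonpos (by nlinarith)]; ring
    _ ≤ ‖_‖ := Complex.abs_re_le_norm _
  -- upper bound on |a + b|
  have hab : ‖a + b‖ ≤ 3 * Real.sqrt (1 + r₀) := by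
    have hA : ‖a‖ ≤ Real.sqrt 2 * Real.sqrt (1 + r₀) := by
      rw [ha, abs_csqrt, ← Real.sqrt_mul (by norm_num : (0:ℝ) ≤ 2)]
      apply Real.sqrt_le_sqrt
      calc ‖z - (r₀ : ℂ)‖ ≤ ‖z‖ + ‖-(r₀ : ℂ)‖ := by
            rw [sub_eq_add_neg]; exact norm_add_le _ _
      _ ≤ 2 + r₀ := by
            rw [norm_neg, Complex.norm_real, Real.norm_eq_abs, abs_of_nonneg hr₀]
            linarith
      _ ≤ 2 * (1 + r₀) := by linarith
    have hB : ‖b‖ ≤ Real.sqrt 2 * Real.sqrt (1 + r₀) := by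
      rw [hb, norm_mul, abs_csqrt]
      have hγabs : ‖(γ : ℂ)‖ ≤ 1 := by
        rw [Complex.norm_real, Real.norm_eq_abs, abs_of_nonneg (by linarith)]
        linarith
      calc ‖(γ : ℂ)‖ * Real.sqrt (‖z‖) ≤ 1 * Real.sqrt 2 :=
            mul_le_mul hγabs (Real.sqrt_le_sqrt habsz) (Real.sqrt_nonneg _) (by norm_num)
      _ = Real.sqrt 2 * 1 := by ring
      _ ≤ Real.sqrt 2 * Real.sqrt (1 + r₀) :=
            mul_le_mul_of_nonneg_left hsq1 (Real.sqrt_nonneg _)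
    have h2 : Real.sqrt 2 ≤ 3 / 2 := by
      nlinarith [Real.sq_sqrt (show (0:ℝ) ≤ 2 by norm_num), Real.sqrt_nonneg 2]
    calc ‖a + b‖ ≤ ‖a‖ + ‖b‖ := norm_add_le _ _
    _ ≤ 2 * Real.sqrt 2 * Real.sqrt (1 + r₀) := by linarith
    _ ≤ 3 * Real.sqrt (1 + r₀) := by nlinarith
  -- combine
  have hmain : ε₀ * (1 + r₀) ≤ ‖a - b‖ * (3 * Real.sqrt (1 + r₀)) := by
    calc ε₀ * (1 + r₀) ≤ ‖((1 - γ ^ 2 : ℝ) : ℂ) * z - (r₀ : ℂ)‖ := hnum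
    _ = ‖a - b‖ * ‖a + b‖ := by rw [← key, norm_mul]
    _ ≤ ‖a - b‖ * (3 * Real.sqrt (1 + r₀)) :=
        mul_le_mul_of_nonneg_left hab (norm_nonneg _)
  have hsq : Real.sqrt (1 + r₀) * Real.sqrt (1 + r₀) = 1 + r₀ :=
    Real.mul_self_sqrt (by linarith)
  nlinarith [hmain, hsq, hsqpos, norm_nonneg (a - b)]
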